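/- arXiv:1210.8065 — 4 statements merged into one kernel-verified Lean document; each statement's English description precedes it below -/
import Mathlib

section
/- Let φ : X → Y be a homomorphism of modules over an algebra A, and suppose X is equipped with an A-action such that a fixed two-sided ideal J of A (of codimension 1, the kernel of a character ε : A → ℂ) acts on X locally nilpotently. If the restriction of φ to the subspace of ε-Whittaker vectors of X (vectors v with x·v = ε(x)·v for all x ∈ A) is injective, then φ is injective. -/
/-- Let `φ : X → Y` be a homomorphism of modules over a `ℂ`-algebra `A` with
character `ε`.  If the augmentation ideal `J = ker ε` acts locally nilpotently on `X`
(every vector is killed by all products of sufficiently many elements of `J`), and the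
restriction of `φ` to the subspace of `ε`-Whittaker vectors of `X` is injective, then `φ`
is injective. -/
theorem stmt_0 (A X Y : Type) [Ring A] [Algebra ℂ A]
    [AddCommGroup X] [Module ℂ X] [Module A X] [IsScalarTower ℂ A X]
    [AddCommGroup Y] [Module A Y]
    (ε : A →ₐ[ℂ] ℂ) (φ : X →ₗ[A] Y)
    (hnil : ∀ v : X, ∃ n : ℕ, ∀ l : List A, n ≤ l.length →
      (∀ a ∈ l, ε a = 0) → l.prod • v = 0)
    (hinj : ∀ v w : X, (∀ a : A, a • v = ε a • v) → (∀ a : A, a • w = ε a • w) →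
      φ v = φ w → v = w) :
    Function.Injective φ := by
  have key : ∀ n : ℕ, ∀ v : X, v ≠ 0 →
      (∀ l : List A, n ≤ l.length → (∀ a ∈ l, ε a = 0) → l.prod • v = 0) →
      ∃ c : A, c • v ≠ 0 ∧ ∀ a : A, ε a = 0 → a • (c • v) = 0 := by
    intro n
    induction n with
    | zero =>
      intro v hv h
      exact absurd (by simpa using h [] (by simp) (by simp)) hv
    | succ n ih =>
      intro v hv h
      by_cases hw : ∀ a : A, ε a = 0 → a • v = 0
      · exact ⟨1, by simpa using hv, by simpa using hw⟩
      · push_neg at hw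
        obtain ⟨a, ha, hav⟩ := hw
        have hstep : ∀ l : List A, n ≤ l.length → (∀ b ∈ l, ε b = 0) →
            l.prod • (a • v) = 0 := by
          intro l hl hlε
          have := h (l ++ [a]) (by simp; omega) (by
            intro b hb
            simp only [List.mem_append, List.mem_singleton] at hb
            rcases hb with hb | hb
            · exact hlε b hb
            · subst hb; exact ha)
          simpa [List.prod_append, mul_smul] using this
        obtain ⟨c, hc1, hc2⟩ := ih (a • v) hav hstep
        exact ⟨c * a, by rwa [mul_smul], fun b hb => by
          rw [mul_smul]; exact hc2 b hb⟩
  suffices h0 : ∀ u : X, φ u = 0 → u = 0 by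
    intro v w hvw
    have h1 : φ (v - w) = 0 := by rw [map_sub, hvw, sub_self]
    exact sub_eq_zero.mp (h0 _ h1)
  intro u hu
  by_contra hne
  obtain ⟨n, hn⟩ := hnil u
  obtain ⟨c, hc1, hc2⟩ := key n u hne hn
  set w := c • u with hw
  have hwh : ∀ a : A, a • w = ε a • w := by
    intro a
    have h1 : ε (a - (ε a) • (1 : A)) = 0 := by simp
    have h2 := hc2 _ h1
    have h3 : (a - (ε a) • (1 : A)) • w = a • w - ε a • w := by
      rw [sub_smul, smul_assoc, one_smul]
    rw [h3] at h2
    exact sub_eq_zero.mp h2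
  have hφw : φ w = 0 := by rw [hw, map_smul, hu, smul_zero]
  have h0w : w = 0 := hinj w 0 hwh (by intro a; simp) (by rw [hφw, map_zero])
  exact hc1 h0w
end

section
/- Let A be an algebra over ℂ with character ε and augmentation ideal J, and let φ : X → Y be an injective homomorphism of A-modules. Assume: (i) φ induces an isomorphism between the spaces of ε-Whittaker vectors of X and of Y; (ii) Ext¹_A(ℂ_ε, X) = 0, where ℂ_ε is the one-dimensional A-module given by ε; (iii) the J-action on the cokernel of φ is locally nilpotent. Then φ is surjective (hence an isomorphism). -/
/-- Let `A` be a `ℂ`-algebra with character `ε` and augmentation ideal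
`J = ker ε`, and `φ : X → Y` an injective homomorphism of `A`-modules.  Assume:
(i) `φ` induces an isomorphism between the spaces of `ε`-Whittaker vectors of `X` and `Y`;
(ii) `Ext¹_A(ℂ_ε, X) = 0`, formulated as: every extension of `X` by the one-dimensional
module `ℂ_ε` splits;
(iii) the `J`-action on the cokernel of `φ` is locally nilpotent.
Then `φ` is surjective (hence an isomorphism). -/
theorem stmt_1 (A X Y Cε : Type) [Ring A] [Algebra ℂ A]
    [AddCommGroup X] [Module ℂ X] [Module A X] [IsScalarTower ℂ A X]
    [AddCommGroup Y] [Module ℂ Y] [Module A Y] [IsScalarTower ℂ A Y]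
    [AddCommGroup Cε] [Module ℂ Cε] [Module A Cε] [IsScalarTower ℂ A Cε]
    (ε : A →ₐ[ℂ] ℂ) (c : Cε) (hc0 : c ≠ 0)
    (hcgen : ∀ z : Cε, ∃ t : ℂ, z = t • c)
    (hcε : ∀ a : A, a • c = ε a • c)
    (φ : X →ₗ[A] Y) (hφinj : Function.Injective φ)
    -- (i): every Whittaker vector of `Y` comes from a Whittaker vector of `X`
    (hWh : ∀ y : Y, (∀ a : A, a • y = ε a • y) →
      ∃ x : X, (∀ a : A, a • x = ε a • x) ∧ φ x = y)
    -- (ii): `Ext¹_A(ℂ_ε, X) = 0`, i.e. every extension of `X` by `ℂ_ε` splits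
    (hext : ∀ (E : Type) [AddCommGroup E] [Module A E],
      ∀ (f : X →ₗ[A] E) (g : E →ₗ[A] Cε),
      Function.Injective f → Function.Surjective g → Function.Exact f g →
      ∃ r : E →ₗ[A] X, r.comp f = LinearMap.id)
    -- (iii): the augmentation ideal acts locally nilpotently on the cokernel of `φ`
    (hcoker : ∀ y : Y, ∃ n : ℕ, ∀ l : List A, n ≤ l.length →
      (∀ a ∈ l, ε a = 0) → l.prod • y ∈ LinearMap.range φ) :
    Function.Surjective φ := by
  have main : ∀ n : ℕ, ∀ y : Y,
      (∀ l : List A, n ≤ l.length → (∀ a ∈ l, ε a = 0) →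
        l.prod • y ∈ LinearMap.range φ) → y ∈ LinearMap.range φ := by
    intro n
    induction n with
    | zero =>
      intro y hy
      simpa using hy [] (by simp) (by simp)
    | succ n ih =>
      intro y hy
      have key : ∀ a : A, ε a = 0 → a • y ∈ LinearMap.range φ := by
        intro a ha
        apply ih
        intro l hl hJ
        have h := hy (l ++ [a]) (by simpa using Nat.succ_le_succ hl)
          (by
            intro b hb
            rcases List.mem_append.mp hb with h | h
            · exact hJ b h
            · rw [List.mem_singleton.mp h]; exact ha)
        simpa [List.prod_append, mul_smul] using h
      have key2 : ∀ a : A, a • y - algebraMap ℂ A (ε a) • y ∈ LinearMap.range φ := by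
        intro a
        have h0 : ε (a - algebraMap ℂ A (ε a)) = 0 := by simp
        have h := key _ h0
        simpa [sub_smul] using h
      by_cases hy0 : y ∈ LinearMap.range φ
      · exact hy0
      exfalso
      set π : Y →ₗ[A] (Y ⧸ LinearMap.range φ) := (LinearMap.range φ).mkQ with hπ
      set q : Y ⧸ LinearMap.range φ := π y with hq
      have hq0 : q ≠ 0 := by
        simpa [hq, hπ, Submodule.Quotient.mk_eq_zero] using hy0
      have hqW : ∀ a : A, a • q = algebraMap ℂ A (ε a) • q := by
        intro a
        have h : π (a • y - algebraMap ℂ A (ε a) • y) = 0 :=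
          (Submodule.Quotient.mk_eq_zero _).mpr (key2 a)
        rw [map_sub, map_smul, map_smul] at h
        rw [sub_eq_zero.mp h]
      have huniq : ∀ t t' : ℂ,
          algebraMap ℂ A t • q = algebraMap ℂ A t' • q → t = t' := by
        intro t t' h
        by_contra htt'
        have hz : algebraMap ℂ A (t - t') • q = 0 := by
          rw [map_sub, sub_smul, h, sub_self]
        apply hq0
        calc q = algebraMap ℂ A ((t - t')⁻¹ * (t - t')) • q := by
              rw [inv_mul_cancel₀ (sub_ne_zero.mpr htt'), map_one, one_smul]
          _ = algebraMap ℂ A (t - t')⁻¹ • (algebraMap ℂ A (t - t') • q) := by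
              rw [map_mul, mul_smul]
          _ = 0 := by rw [hz, smul_zero]
      set M : Submodule A Y := Submodule.comap π (Submodule.span A {q}) with hM
      have hmemM : ∀ m : M, ∃ t : ℂ, π m.1 = algebraMap ℂ A t • q := by
        intro m
        rcases Submodule.mem_span_singleton.mp (Submodule.mem_comap.mp m.2) with ⟨a, ha⟩
        exact ⟨ε a, by rw [← ha, hqW a]⟩
      choose tf htf using hmemM
      have htfu : ∀ (m : M) (t : ℂ), π m.1 = algebraMap ℂ A t • q → tf m = t :=
        fun m t h => huniq _ _ ((htf m).symm.trans h)
      -- helper computations in Cε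
      have hactA : ∀ (a : A) (t : ℂ), a • (t • c) = (t * ε a) • c := by
        intro a t
        calc a • (t • c) = a • (algebraMap ℂ A t • c) := by rw [algebraMap_smul]
          _ = (a * algebraMap ℂ A t) • c := by rw [mul_smul]
          _ = (algebraMap ℂ A t * a) • c := by rw [Algebra.commutes]
          _ = algebraMap ℂ A t • (a • c) := by rw [mul_smul]
          _ = algebraMap ℂ A t • ((ε a) • c) := by rw [hcε]
          _ = t • ((ε a) • c) := by rw [algebraMap_smul]
          _ = (t * ε a) • c := by rw [smul_smul]
      -- membership facts
      have hyM : y ∈ M := by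
        apply Submodule.mem_comap.mpr
        exact Submodule.mem_span_singleton_self q
      have hφM : ∀ x : X, φ x ∈ M := by
        intro x
        apply Submodule.mem_comap.mpr
        have : π (φ x) = 0 := by
          simp [hπ, Submodule.Quotient.mk_eq_zero]
        rw [this]; exact Submodule.zero_mem _
      -- tf is additive / equivariant
      have htf_add : ∀ m₁ m₂ : M, tf (m₁ + m₂) = tf m₁ + tf m₂ := by
        intro m₁ m₂
        apply htfu
        have : (↑(m₁ + m₂) : Y) = (m₁ : Y) + (m₂ : Y) := rfl
        rw [this, map_add, htf m₁, htf m₂, map_add, add_smul]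
      have htf_smul : ∀ (a : A) (m : M), tf (a • m) = tf m * ε a := by
        intro a m
        apply htfu
        have h1 : (↑(a • m) : Y) = a • (m : Y) := rfl
        rw [h1, map_smul, htf m]
        calc a • (algebraMap ℂ A (tf m) • q)
            = (a * algebraMap ℂ A (tf m)) • q := by rw [mul_smul]
          _ = (algebraMap ℂ A (tf m) * a) • q := by rw [Algebra.commutes]
          _ = algebraMap ℂ A (tf m) • (a • q) := by rw [mul_smul]
          _ = algebraMap ℂ A (tf m) • (algebraMap ℂ A (ε a) • q) := by rw [hqW]
          _ = algebraMap ℂ A (tf m * ε a) • q := by rw [map_mul, mul_smul]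
      set g : M →ₗ[A] Cε :=
        { toFun := fun m => tf m • c
          map_add' := by
            intro m₁ m₂
            show tf (m₁ + m₂) • c = tf m₁ • c + tf m₂ • c
            rw [htf_add, add_smul]
          map_smul' := by
            intro a m
            show tf (a • m) • c = a • (tf m • c)
            rw [htf_smul, ← hactA a (tf m)] } with hg
      set f : X →ₗ[A] M := φ.codRestrict M hφM with hf
      have hgval : ∀ m : M, g m = tf m • c := fun m => rfl
      have hfval : ∀ x : X, (f x : Y) = φ x := fun x => rfl
      have finj : Function.Injective f := by
        intro x₁ x₂ h
        apply hφinj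
        rw [← hfval, ← hfval, h]
      have htf0 : ∀ m : M, tf m = 0 ↔ (m : Y) ∈ LinearMap.range φ := by
        intro m
        constructor
        · intro h
          have := htf m
          rw [h, map_zero, zero_smul] at this
          simpa [hπ, Submodule.Quotient.mk_eq_zero] using this
        · intro h
          apply htfu
          have : π m.1 = 0 := by simpa [hπ, Submodule.Quotient.mk_eq_zero] using h
          rw [this, map_zero, zero_smul]
      have gsurj : Function.Surjective g := by
        intro z
        rcases hcgen z with ⟨t, rfl⟩
        refine ⟨algebraMap ℂ A t • ⟨y, hyM⟩, ?_⟩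
        have h1 : tf (algebraMap ℂ A t • (⟨y, hyM⟩ : M)) = t := by
          apply htfu
          have : (↑(algebraMap ℂ A t • (⟨y, hyM⟩ : M)) : Y) = algebraMap ℂ A t • y := rfl
          rw [this, map_smul]
        rw [hgval, h1]
      have hexact : Function.Exact f g := by
        rw [LinearMap.exact_iff]
        ext m
        simp only [LinearMap.mem_ker, LinearMap.mem_range]
        rw [hgval]
        constructor
        · intro h
          have ht : tf m = 0 := by
            rcases smul_eq_zero.mp h with h | h
            · exact h
            · exact absurd h hc0
          rcases (htf0 m).mp ht with ⟨x, hx⟩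
          exact ⟨x, Subtype.ext (by rw [hfval, hx])⟩
        · rintro ⟨x, rfl⟩
          have : tf (f x) = 0 := (htf0 (f x)).mpr ⟨x, (hfval x).symm⟩
          rw [this, zero_smul]
      obtain ⟨r, hr⟩ := hext M f g finj gsurj hexact
      have hrf : ∀ x : X, r (f x) = x := fun x => LinearMap.ext_iff.mp hr x
      set my : M := ⟨y, hyM⟩ with hmy
      set x0 : X := r my with hx0
      set mw : M := my - f x0 with hmw
      have hrw : r mw = 0 := by
        rw [hmw, map_sub, hrf, hx0, sub_self]
      have haw : ∀ a : A, a • mw = algebraMap ℂ A (ε a) • mw := by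
        intro a
        set u : M := a • mw - algebraMap ℂ A (ε a) • mw with hu
        have hgu : g u = 0 := by
          rw [hu, map_sub, map_smul, map_smul, hgval, hactA,
            algebraMap_smul, smul_smul, mul_comm (ε a) (tf mw), sub_self]
        have hur : u ∈ LinearMap.range f := by
          have := (LinearMap.exact_iff.mp hexact) ▸ (LinearMap.mem_ker.mpr hgu)
          exact this
        rcases hur with ⟨x', hx'⟩
        have hru : r u = 0 := by
          rw [hu, map_sub, map_smul, map_smul, hrw, smul_zero, smul_zero, sub_self]
        have hx'0 : x' = 0 := by
          have := hrf x'
          rw [hx', hru] at this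
          exact this.symm
        have hu0 : u = 0 := by rw [← hx', hx'0, map_zero]
        have := sub_eq_zero.mp (hu ▸ hu0)
        exact this
      have hwW : ∀ a : A, a • (y - φ x0) = ε a • (y - φ x0) := by
        intro a
        have h := congrArg (Subtype.val : M → Y) (haw a)
        have h1 : (↑(a • mw) : Y) = a • (y - φ x0) := by
          rw [hmw]; rfl
        have h2 : (↑(algebraMap ℂ A (ε a) • mw) : Y) = algebraMap ℂ A (ε a) • (y - φ x0) := by
          rw [hmw]; rfl
        rw [h1, h2, algebraMap_smul] at h
        exact h
      rcases hWh (y - φ x0) hwW with ⟨x, -, hx⟩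
      apply hy0
      exact ⟨x + x0, by rw [map_add, hx, sub_add_cancel]⟩
  intro y
  obtain ⟨n, hn⟩ := hcoker y
  rcases main n y hn with ⟨x, hx⟩
  exact ⟨x, hx⟩
end

section
/- Let A be a Noetherian ring and J a two-sided ideal of A. If the Rees ring A + Jt + J²t² + ⋯ ⊆ A[t] (t a central indeterminate) is Noetherian, then J satisfies the weak Artin–Rees property: for every finitely generated left A-module M and every submodule N ⊆ M there exists n > 0 with JⁿM ∩ N ⊆ JN. -/
/-!
Let `t` act on `M[t] = ℕ →₀ M` by shifting degrees; this makes `M[t]` an `A[t]`-module, hence a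
module over the Rees ring `R`. The graded `R`-submodule `⊕ₙ (JⁿM ∩ N) tⁿ` lies in the
`R`-submodule generated by a finite generating set of `M` placed in degree `0`, so it is finitely
generated because `R` is Noetherian, say by elements of degree `≤ k`. In degree `k + 1` it then
consists of combinations of the generators with coefficients of positive degree, which lie in
`J · Jⁱ`; hence `J^(k+1) M ∩ N ⊆ J N`.
-/

namespace ReesModule

open Polynomial Finset.HasAntidiagonal

variable {A M : Type*} [Ring A] [AddCommGroup M] [Module A M]

noncomputable def shift : AddMonoid.End (ℕ →₀ M) := Finsupp.mapDomain.addMonoidHom Nat.succ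

theorem shift_pow_single (i j : ℕ) (m : M) :
    (shift ^ i) (Finsupp.single j m) = Finsupp.single (i + j) m := by
  induction i with
  | zero => simp
  | succ i ih =>
    rw [pow_succ', AddMonoid.End.coe_mul, Function.comp_apply, ih, add_right_comm]
    exact Finsupp.mapDomain_single

variable (A M) in
noncomputable def action : A[X] →+* AddMonoid.End (ℕ →₀ M) :=
  eval₂RingHom' (Module.toAddMonoidEnd A (ℕ →₀ M)) shift fun a =>
    AddMonoidHom.ext fun f => (Finsupp.mapDomain_smul a f).symm

noncomputable local instance polyModule : Module A[X] (ℕ →₀ M) := Module.compHom _ (action A M)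

theorem monomial_smul_single (i j : ℕ) (a : A) (m : M) :
    monomial i a • Finsupp.single j m = Finsupp.single (i + j) (a • m) := by
  change eval₂ (Module.toAddMonoidEnd A (ℕ →₀ M)) shift (monomial i a) (Finsupp.single j m) = _
  rw [eval₂_monomial, AddMonoid.End.coe_mul, Function.comp_apply, shift_pow_single]
  exact Finsupp.smul_single a _ m

theorem smul_apply (p : A[X]) (f : ℕ →₀ M) (n : ℕ) :
    (p • f) n = ∑ x ∈ antidiagonal n, p.coeff x.1 • f x.2 := by
  induction p using Polynomial.induction_on' with
  | add p q hp hq => simp [add_smul, hp, hq, Finset.sum_add_distrib]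
  | monomial i a =>
    induction f using Finsupp.induction_linear with
    | zero => simp
    | add f g hf hg => simp [smul_add, hf, hg, Finset.sum_add_distrib]
    | single j m =>
      have hterm : ∀ x : ℕ × ℕ, (monomial i a).coeff x.1 • Finsupp.single j m x.2 =
          if (i, j) = x then a • m else 0 := by
        rintro ⟨k, l⟩
        by_cases hk : i = k <;> by_cases hl : j = l <;> simp [coeff_monomial, hk, hl]
      rw [monomial_smul_single, Finset.sum_congr rfl fun x _ => hterm x, Finset.sum_ite_eq,
        Finsupp.single_apply]
      simp only [mem_antidiagonal]

def IsStable (R : Set A[X]) (D : ℕ → Submodule A M) : Prop :=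
  ∀ p ∈ R, ∀ i j, ∀ x ∈ D j, p.coeff i • x ∈ D (i + j)

theorem IsStable.inf {R : Set A[X]} {D : ℕ → Submodule A M} (hD : IsStable R D)
    (N : Submodule A M) : IsStable R fun j => D j ⊓ N :=
  fun p hp i j x hx => ⟨hD p hp i j x hx.1, N.smul_mem _ hx.2⟩

def reesSubmodule (R : Subring A[X]) (D : ℕ → Submodule A M) (hD : IsStable (R : Set A[X]) D) :
    Submodule R (ℕ →₀ M) where
  carrier := {f | ∀ n, f n ∈ D n}
  add_mem' hf hg n := add_mem (hf n) (hg n)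
  zero_mem' n := zero_mem (D n)
  smul_mem' p f hf n := by
    change ((p : A[X]) • f) n ∈ D n
    rw [smul_apply]
    exact sum_mem fun x hx => mem_antidiagonal.1 hx ▸ hD p p.2 x.1 x.2 _ (hf x.2)

variable {R : Subring A[X]} {D : ℕ → Submodule A M} {hD : IsStable (R : Set A[X]) D}

theorem single_mem_reesSubmodule {n : ℕ} {x : M} (hx : x ∈ D n) :
    Finsupp.single n x ∈ reesSubmodule R D hD := fun j => by
  rw [Finsupp.single_apply]
  split_ifs with h
  · exact h ▸ hx
  · exact zero_mem _

theorem exists_le_of_reesSubmodule_fg (hfg : (reesSubmodule R D hD).FG) :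
    ∃ k, ∀ n, k < n → ∀ P : Submodule A M,
      (∀ p ∈ R, ∀ i j, 0 < i → i + j = n → ∀ x ∈ D j, p.coeff i • x ∈ P) → D n ≤ P := by
  obtain ⟨S, hS⟩ := hfg
  refine ⟨S.sup fun g => g.support.sup id, fun n hn P hP => ?_⟩
  -- Cutting the degree `n` part down to `P` still leaves an `R`-submodule, and it contains the
  -- generators because they vanish in degree `n`.
  have hT : IsStable (R : Set A[X]) fun j => D j ⊓ if j = n then P else ⊤ := by
    intro p hp i j x ⟨hxD, hxP⟩
    refine ⟨hD p hp i j x hxD, ?_⟩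
    split_ifs at hxP ⊢ with hij hj
    · exact P.smul_mem _ hxP
    · exact hP p hp i j (by omega) hij x hxD
    all_goals exact Submodule.mem_top
  have hle : reesSubmodule R D hD ≤ reesSubmodule R _ hT := by
    rw [← hS, Submodule.span_le]
    intro g hg j
    refine ⟨(hS ▸ Submodule.subset_span hg : g ∈ reesSubmodule R D hD) j, ?_⟩
    split_ifs with hj
    · have hgj : g j = 0 := Finsupp.notMem_support_iff.1 fun hmem => (hj ▸ hn).not_ge <|
        (Finset.le_sup (f := id) hmem).trans
          (Finset.le_sup (f := fun g : ℕ →₀ M => g.support.sup id) hg)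
      exact hgj ▸ zero_mem P
    · trivial
  intro x hx
  simpa using (hle (single_mem_reesSubmodule hx) n).2

theorem single_zero_mem_span (hC : ∀ c, C c ∈ R) {s : Set M} {m : M}
    (hm : m ∈ Submodule.span A s) :
    Finsupp.single 0 m ∈ Submodule.span R (Finsupp.single 0 '' s) := by
  induction hm using Submodule.span_induction with
  | mem y hy => exact Submodule.subset_span ⟨y, hy, rfl⟩
  | zero => simp
  | add y z _ _ hy hz => simpa [Finsupp.single_add] using add_mem hy hz
  | smul c y _ hy =>
    have hCc : (⟨C c, hC c⟩ : R) • Finsupp.single 0 y = Finsupp.single 0 (c • y) := by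
      change C c • Finsupp.single 0 y = _
      rw [← monomial_zero_left, monomial_smul_single]
    exact hCc ▸ Submodule.smul_mem _ _ hy

variable {Jpow : ℕ → Ideal A}

theorem mul_mem_add {J : Ideal A}
    (hJsucc : ∀ m, Jpow (m + 1) = Submodule.span A {x | ∃ a ∈ J, ∃ b ∈ Jpow m, x = a * b})
    {i j : ℕ} {a b : A} (ha : a ∈ Jpow i) (hb : b ∈ Jpow j) : a * b ∈ Jpow (i + j) := by
  induction i generalizing a with
  | zero => simpa using (Jpow j).smul_mem a hb
  | succ i ih =>
    rw [hJsucc] at ha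
    rw [add_right_comm, hJsucc]
    induction ha using Submodule.span_induction with
    | mem x hx =>
      obtain ⟨c, hc, d, hd, rfl⟩ := hx
      exact Submodule.subset_span ⟨c, hc, d * b, ih hd, mul_assoc c d b⟩
    | zero => simp
    | add x y _ _ hx hy => simpa [add_mul] using add_mem hx hy
    | smul c x _ hx => simpa [mul_assoc] using Submodule.smul_mem _ c hx

theorem smul_mem_smul_of_forall_mul_mem {I K L : Ideal A} (hIK : ∀ a ∈ I, ∀ b ∈ K, a * b ∈ L)
    {N : Submodule A M} {a : A} (ha : a ∈ I) {x : M} (hx : x ∈ K • N) : a • x ∈ L • N := by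
  refine Submodule.smul_induction_on hx (fun b hb n hn => ?_) fun x y hx hy => ?_
  · simpa [smul_smul] using Submodule.smul_mem_smul (hIK a ha b hb) hn
  · simpa [smul_add] using add_mem hx hy

theorem span_mul_smul_le (J : Ideal A) (B : Set A) (N : Submodule A M) :
    Submodule.span A {x | ∃ a ∈ J, ∃ b ∈ B, x = a * b} • N ≤ J • N := by
  refine Submodule.smul_le.2 fun r hr n hn => ?_
  induction hr using Submodule.span_induction with
  | mem x hx =>
    obtain ⟨a, ha, b, -, rfl⟩ := hx
    simpa [mul_smul] using Submodule.smul_mem_smul ha (N.smul_mem b hn)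
  | zero => simp
  | add x y _ _ hx hy => simpa [add_smul] using add_mem hx hy
  | smul c x _ hx => simpa [mul_smul] using Submodule.smul_mem _ c hx

theorem monomial_mem (hR : ∀ p : A[X], p ∈ R ↔ ∀ i, p.coeff i ∈ Jpow i) {i : ℕ} {a : A}
    (ha : a ∈ Jpow i) : monomial i a ∈ R :=
  (hR _).2 fun k => by
    rw [coeff_monomial]
    split_ifs with h
    · exact h ▸ ha
    · exact zero_mem _

theorem C_mem (hR : ∀ p : A[X], p ∈ R ↔ ∀ i, p.coeff i ∈ Jpow i) (c : A) : C c ∈ R := by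
  have h1 : (1 : A) ∈ Jpow 0 := by simpa using (hR 1).1 R.one_mem 0
  rw [← monomial_zero_left]
  exact monomial_mem hR (by simpa using (Jpow 0).smul_mem c h1)

theorem mem_span_single_zero (hR : ∀ p : A[X], p ∈ R ↔ ∀ i, p.coeff i ∈ Jpow i) {s : Set M}
    (hs : Submodule.span A s = ⊤) {f : ℕ →₀ M} (hf : ∀ j, f j ∈ Jpow j • (⊤ : Submodule A M)) :
    f ∈ Submodule.span R (Finsupp.single 0 '' s) := by
  rw [← Finsupp.sum_single f]
  refine Submodule.sum_mem _ fun j _ => ?_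
  refine Submodule.smul_induction_on (hf j) (fun a ha m _ => ?_) fun x y hx hy => ?_
  · have hm := single_zero_mem_span (C_mem hR) (hs ▸ Submodule.mem_top : m ∈ Submodule.span A s)
    have hsingle : (⟨monomial j a, monomial_mem hR ha⟩ : R) • Finsupp.single 0 m =
        Finsupp.single j (a • m) := monomial_smul_single j 0 a m
    exact hsingle ▸ Submodule.smul_mem _ _ hm
  · simpa [Finsupp.single_add] using add_mem hx hy

theorem reesSubmodule_fg [IsNoetherianRing R] [Module.Finite A M]
    (hR : ∀ p : A[X], p ∈ R ↔ ∀ i, p.coeff i ∈ Jpow i) (hD : IsStable (R : Set A[X]) D)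
    (hle : ∀ j, D j ≤ Jpow j • (⊤ : Submodule A M)) : (reesSubmodule R D hD).FG := by
  obtain ⟨s, hs⟩ := Module.Finite.fg_top (R := A) (M := M)
  have hfg : (Submodule.span R (Finsupp.single 0 '' (s : Set M))).FG :=
    Submodule.fg_span (s.finite_toSet.image _)
  have := isNoetherian_of_fg_of_noetherian _ hfg
  exact Submodule.FG.of_le_of_isNoetherian fun f hf =>
    mem_span_single_zero hR hs fun j => hle j (hf j)

theorem isStable_smul_top {J : Ideal A}
    (hJsucc : ∀ m, Jpow (m + 1) = Submodule.span A {x | ∃ a ∈ J, ∃ b ∈ Jpow m, x = a * b})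
    (hR : ∀ p ∈ R, ∀ i, p.coeff i ∈ Jpow i) :
    IsStable (R : Set A[X]) fun j => Jpow j • (⊤ : Submodule A M) := fun p hp i _ _ hx =>
  smul_mem_smul_of_forall_mul_mem (fun _ ha _ hb => mul_mem_add hJsucc ha hb) (hR p hp i) hx

theorem exists_pos_smul_top_inf_le_smul {J : Ideal A}
    (hJsucc : ∀ m, Jpow (m + 1) = Submodule.span A {x | ∃ a ∈ J, ∃ b ∈ Jpow m, x = a * b})
    (hR : ∀ p : A[X], p ∈ R ↔ ∀ i, p.coeff i ∈ Jpow i) [IsNoetherianRing R] [Module.Finite A M]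
    (N : Submodule A M) : ∃ n, 0 < n ∧ Jpow n • (⊤ : Submodule A M) ⊓ N ≤ J • N := by
  have hD := (isStable_smul_top hJsucc fun p hp => (hR p).1 hp).inf N
  obtain ⟨k, hk⟩ := exists_le_of_reesSubmodule_fg (reesSubmodule_fg hR hD fun _ => inf_le_left)
  refine ⟨k + 1, k.succ_pos, hk _ k.lt_succ_self _ fun p hp i _ hi _ x hx => ?_⟩
  obtain ⟨i, rfl⟩ := Nat.exists_eq_succ_of_ne_zero hi.ne'
  have hcoeff := (hR p).1 hp (i + 1)
  rw [hJsucc] at hcoeff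
  exact span_mul_smul_le J (Jpow i) N (Submodule.smul_mem_smul hcoeff hx.2)

end ReesModule

theorem stmt_3_general (A : Type) [Ring A]
    (J : Ideal A)
    -- the powers of the two-sided ideal `J`
    (Jpow : ℕ → Ideal A)
    (hJsucc : ∀ m : ℕ, Jpow (m + 1) =
      Submodule.span A {x : A | ∃ a ∈ J, ∃ b ∈ Jpow m, x = a * b})
    -- the Rees ring `R = ⊕ₙ Jⁿ tⁿ ⊆ A[t]`
    (R : Subring (Polynomial A))
    (hR : ∀ p : Polynomial A, p ∈ R ↔ ∀ i : ℕ, p.coeff i ∈ Jpow i)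
    (hNoeth : IsNoetherianRing ↥R) :
    ∀ (M : Type) [AddCommGroup M] [Module A M], Module.Finite A M →
      ∀ N : Submodule A M, ∃ n : ℕ, 0 < n ∧
        Submodule.span A {y : M | ∃ a ∈ Jpow n, ∃ m : M, y = a • m} ⊓ N ≤
          Submodule.span A {y : M | ∃ a ∈ J, ∃ m ∈ N, y = a • m} := by
  intro M _ _ _ N
  obtain ⟨n, hn, hle⟩ := ReesModule.exists_pos_smul_top_inf_le_smul hJsucc hR N
  refine ⟨n, hn, le_trans (inf_le_inf_right N ?_) (hle.trans ?_)⟩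
  · exact Submodule.span_le.2 fun _ ⟨a, ha, m, hy⟩ =>
      hy ▸ Submodule.smul_mem_smul ha Submodule.mem_top
  · exact Submodule.smul_le.2 fun a ha m hm => Submodule.subset_span ⟨a, ha, m, hm, rfl⟩

/-- noncommutative Artin–Rees: Let `A` be a (left) Noetherian ring and `J` a
two-sided ideal of `A`, with powers `Jⁿ` (`J⁰ = A`, `J^{n+1} = J·Jⁿ`).  If the Rees ring
`A + Jt + J²t² + ⋯ ⊆ A[t]` is (left) Noetherian, then `J` satisfies the weak Artin–Rees
property: for every finitely generated left `A`-module `M` and every submodule `N ⊆ M` there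
is `n > 0` with `JⁿM ∩ N ⊆ JN`. -/
theorem stmt_3 (A : Type) [Ring A] [IsNoetherianRing A]
    (J : Ideal A) (hJ2 : ∀ a ∈ J, ∀ b : A, a * b ∈ J)
    -- the powers of the two-sided ideal `J`
    (Jpow : ℕ → Ideal A)
    (hJ0 : Jpow 0 = ⊤)
    (hJsucc : ∀ m : ℕ, Jpow (m + 1) =
      Submodule.span A {x : A | ∃ a ∈ J, ∃ b ∈ Jpow m, x = a * b})
    -- the Rees ring `R = ⊕ₙ Jⁿ tⁿ ⊆ A[t]`
    (R : Subring (Polynomial A))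
    (hR : ∀ p : Polynomial A, p ∈ R ↔ ∀ i : ℕ, p.coeff i ∈ Jpow i)
    (hNoeth : IsNoetherianRing ↥R) :
    ∀ (M : Type) [AddCommGroup M] [Module A M], Module.Finite A M →
      ∀ N : Submodule A M, ∃ n : ℕ, 0 < n ∧
        Submodule.span A {y : M | ∃ a ∈ Jpow n, ∃ m : M, y = a • m} ⊓ N ≤
          Submodule.span A {y : M | ∃ a ∈ J, ∃ m ∈ N, y = a • m} :=
  stmt_3_general A J Jpow hJsucc R hR hNoeth
end

section
/- Let A be a ℂ-algebra with character ε and augmentation ideal J, let W₀ be a ℂ-vector space, and let Y = hom_ℂ(A, ℂ) ⊗ W₀ where hom_ℂ(A, ℂ) = { f ∈ A* : f(Jⁿ) = 0 for some n } carries the right A-action induced by left multiplication. Then the space of ε-Whittaker vectors of Y is exactly ε ⊗ W₀ ≅ W₀, where ε ∈ hom_ℂ(A, ℂ) is the counit. -/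
open scoped TensorProduct
open MulOpposite

namespace Stmt11

variable (A : Type) [Ring A] [Algebra ℂ A] (W : Type) [AddCommGroup W] [Module ℂ W]

/-- The right `A`-module structure on `Hom_ℂ(A, W)` induced by left multiplication:
`(f · a) x = f (a x)`. -/
instance opSMul : SMul Aᵐᵒᵖ (A →ₗ[ℂ] W) :=
  ⟨fun r f => f.comp (LinearMap.mulLeft ℂ r.unop)⟩

@[simp] lemma opSMul_apply (r : Aᵐᵒᵖ) (f : A →ₗ[ℂ] W) (x : A) :
    (r • f) x = f (r.unop * x) := rfl

instance opModule : Module Aᵐᵒᵖ (A →ₗ[ℂ] W) where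
  one_smul f := by ext x; simp
  mul_smul r s f := by ext x; simp [mul_assoc]
  smul_zero r := by ext x; simp
  smul_add r f g := by ext x; simp
  add_smul r s f := by ext x; simp [add_mul]
  zero_smul f := by ext x; simp

instance : IsScalarTower ℂ Aᵐᵒᵖ (A →ₗ[ℂ] W) := by
  constructor
  intro c r f
  ext x
  simp [MulOpposite.unop_smul, smul_mul_assoc]

instance : SMulCommClass ℂ Aᵐᵒᵖ (A →ₗ[ℂ] W) := by
  constructor
  intro c r f
  ext x
  simp

variable (ε : A →ₐ[ℂ] ℂ)

/-- The torsion part `hom_ℂ(A, W) = { f : f(Jⁿ) = 0 for some n }` of `Hom_ℂ(A, W)`, where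
`J = ker ε` is the augmentation ideal. -/
def torsionHom : Submodule Aᵐᵒᵖ (A →ₗ[ℂ] W) where
  carrier := {f | ∃ n : ℕ, ∀ l : List A, n ≤ l.length → (∀ a ∈ l, ε a = 0) → f l.prod = 0}
  add_mem' := by
    rintro f g ⟨n, hf⟩ ⟨m, hg⟩
    exact ⟨max n m, fun l hl hlJ => by
      simp [hf l (le_trans (le_max_left n m) hl) hlJ,
        hg l (le_trans (le_max_right n m) hl) hlJ]⟩
  zero_mem' := ⟨0, fun l _ _ => rfl⟩
  smul_mem' := by
    rintro r f ⟨n, hf⟩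
    refine ⟨n + 1, fun l hl hlJ => ?_⟩
    match l, hl with
    | a :: t, hl =>
      have h1 : (r • f) ((a :: t).prod) = f (((r.unop * a) :: t).prod) := by
        simp [List.prod_cons, mul_assoc]
      rw [h1]
      refine hf _ (by simpa using Nat.le_of_succ_le hl) ?_
      rintro b hb
      rcases List.mem_cons.mp hb with hb | hb
      · subst hb
        simp [map_mul, hlJ a (List.mem_cons_self)]
      · exact hlJ b (List.mem_cons_of_mem a hb)

instance : SMulCommClass ℂ Aᵐᵒᵖ ↥(torsionHom A W ε) := by
  constructor
  intro c r v
  apply Subtype.ext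
  show c • (r • (v : A →ₗ[ℂ] W)) = r • (c • (v : A →ₗ[ℂ] W))
  ext x
  simp

/-- The counit `ε` itself is an element of `hom_ℂ(A, ℂ)`: it vanishes on `J`. -/
lemma eps_mem : ε.toLinearMap ∈ torsionHom A ℂ ε := by
  refine ⟨1, fun l hl hlJ => ?_⟩
  have : (l.map ε).prod = 0 := by
    apply List.prod_eq_zero
    match l, hl with
    | a :: t, _ => exact List.mem_map.mpr ⟨a, List.mem_cons_self, hlJ a (List.mem_cons_self)⟩
  simpa [map_list_prod] using this

/-! A Whittaker vector `y` of `hom_ℂ(A, ℂ) ⊗ W₀` is read off through the coordinates of `y`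
along a basis of `W₀`: each coordinate is a Whittaker functional `f`, and
`f x = f (x * 1) = ε x * f 1` forces `f = f 1 • ε`. -/

theorem _root_.TensorProduct.equivFinsuppOfBasisRight_smul {R S M N ι : Type*} [CommRing R]
    [AddCommGroup M] [Module R M] [AddCommGroup N] [Module R N] [Monoid S]
    [DistribMulAction S M] [SMulCommClass R S M] [DecidableEq ι] (𝒞 : Module.Basis ι R N)
    (s : S) (y : M ⊗[R] N) :
    TensorProduct.equivFinsuppOfBasisRight 𝒞 (s • y) =
      s • TensorProduct.equivFinsuppOfBasisRight 𝒞 y := by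
  induction y using TensorProduct.induction_on with
  | zero => simp
  | tmul m n =>
    ext i
    simp [TensorProduct.smul_tmul', smul_comm]
  | add y z hy hz => simp only [smul_add, map_add, hy, hz]

lemma apply_eq_smul_apply_one_of_whittaker {f : A →ₗ[ℂ] W}
    (hf : ∀ a : A, op a • f = ε a • f) (x : A) : f x = ε x • f 1 := by
  simpa using congrArg (· 1) (hf x)

abbrev counit : torsionHom A ℂ ε := ⟨ε.toLinearMap, eps_mem A ε⟩

lemma op_smul_counit (a : A) : op a • counit A ε = ε a • counit A ε := by
  ext x
  simp

lemma eq_smul_counit_of_whittaker {f : torsionHom A ℂ ε}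
    (hf : ∀ a : A, op a • f = ε a • f) : f = (f : A →ₗ[ℂ] ℂ) 1 • counit A ε := by
  ext x
  simpa [mul_comm] using
    apply_eq_smul_apply_one_of_whittaker A ℂ ε (f := f) (fun a => congrArg Subtype.val (hf a)) x

/-- Let `A` be a `ℂ`-algebra with character `ε` and augmentation ideal `J`,
`W₀` a `ℂ`-vector space, and `Y = hom_ℂ(A, ℂ) ⊗ W₀`, where
`hom_ℂ(A, ℂ) = { f ∈ A* : f(Jⁿ) = 0 for some n }` carries the right `A`-action induced by
left multiplication (acting on the first tensor factor).  Then the `ε`-Whittaker vectors of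
`Y` are exactly `ε ⊗ W₀ ≅ W₀`. -/
theorem stmt_11 (W₀ : Type) [AddCommGroup W₀] [Module ℂ W₀] :
    ∀ y : (↥(torsionHom A ℂ ε)) ⊗[ℂ] W₀,
      (∀ a : A, (op a) • y = ε a • y) ↔
        ∃ w : W₀, y = (⟨ε.toLinearMap, eps_mem A ε⟩ : ↥(torsionHom A ℂ ε)) ⊗ₜ[ℂ] w := by
  classical
  intro y
  constructor
  · intro hy
    let 𝒞 := Module.Basis.ofVectorSpace ℂ W₀
    let e := TensorProduct.equivFinsuppOfBasisRight (M := torsionHom A ℂ ε) 𝒞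
    have hcoord : ∀ i, e y i = (e y i : A →ₗ[ℂ] ℂ) 1 • counit A ε := fun i =>
      eq_smul_counit_of_whittaker A ε fun a => by
        rw [← Finsupp.smul_apply, ← TensorProduct.equivFinsuppOfBasisRight_smul, hy a,
          map_smul, Finsupp.smul_apply]
    let c := (e y).mapRange (fun f : torsionHom A ℂ ε => (f : A →ₗ[ℂ] ℂ) 1) (by simp)
    refine ⟨𝒞.repr.symm c, e.injective ?_⟩
    ext i : 1
    rw [hcoord i, TensorProduct.equivFinsuppOfBasisRight_apply_tmul_apply]
    simp [c]
  · rintro ⟨w, rfl⟩ a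
    rw [TensorProduct.smul_tmul', op_smul_counit, ← TensorProduct.smul_tmul']

end Stmt11
end
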